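/- Let ρ_E be a positive definite d×d density matrix with eigenvalues λ₁,…,λ_d > 0 and orthonormal eigenvectors θ₁,…,θ_d, and let λ_h := (Σ_{i=1}^d λ_i^{-1})^{-1}. Let p₀, p₁ ≥ 0 with p₀ + p₁ = 1, η ∈ [0,1], γ := p₁(1−η) − p₀, and assume γ < 0 and p₁η + γ·λ_h > 0 (Region III). Then: (a) for every unit vector ψ ∈ ℂ^d ⊗ ℂ^d with reduced state ρ_B on the second factor, ‖p₁η·|ψ⟩⟨ψ| + γ·(ρ_E ⊗ ρ_B)‖₁ ≤ p₁η − γ + 2γλ_h; (b) equality holds for ψ_h := Σ_i √(λ_h/λ_i)·θ_i ⊗ θ_i. Consequently, the minimum error over all bipartite pure signal states equals P_err = p₀ + γ(1 − λ_h). -/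

import Mathlib

/-!
Write `Ω = a |ψ⟩⟨ψ| + g K` with `K = ρ_E ⊗ ρ_B`, `a = p₁η` and `g = γ < 0`. Expanding `ρ_E` in
its eigenbasis and `ρ_B = Σₘ ψₘ ψₘ*` (where `ψₘ k = ψ (m, k)`) gives
`⟨v, K v⟩ = Σ_{i,m} λᵢ |⟨θᵢ ⊗ ψₘ, v⟩|²`, while completeness of the `θᵢ` gives
`⟨ψ, v⟩ = Σ_{i,m} θᵢ(m) ⟨θᵢ ⊗ ψₘ, v⟩`. Weighted Cauchy–Schwarz then yields
`K ≥ λ_h |ψ⟩⟨ψ|`, hence `Ω ≤ (a + gλ_h) |ψ⟩⟨ψ|`. So each eigenvalue `μⱼ` of `Ω` is at most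
`(a + gλ_h) |⟨eⱼ, ψ⟩|²`, the positive eigenvalues sum to at most `a + gλ_h` (Parseval), and
`‖Ω‖₁ = 2 Σ μⱼ⁺ - tr Ω` with `tr Ω = a + g`. For `ψ_h` one finds `ρ_B = Σ (λ_h/λᵢ) θᵢθᵢ*`, so
`K ψ_h = λ_h ψ_h`: `ψ_h` is an eigenvector of `Ω` for `a + gλ_h`, which forces equality.
-/

open Matrix BigOperators Kronecker ComplexOrder

/-- The trace norm of a Hermitian matrix: the sum of the absolute values of its eigenvalues. -/
noncomputable def traceNorm {n : Type*} [Fintype n] [DecidableEq n]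
    {A : Matrix n n ℂ} (hA : A.IsHermitian) : ℝ :=
  ∑ i, |hA.eigenvalues i|

namespace Matrix.IsHermitian

variable {n : Type*} [Fintype n] [DecidableEq n] {A : Matrix n n ℂ}

lemma traceNorm_eq_two_mul_sum_max_sub_re_trace (hA : A.IsHermitian) :
    traceNorm hA = 2 * ∑ i, max (hA.eigenvalues i) 0 - A.trace.re := by
  have hsum : A.trace.re = ∑ i, hA.eigenvalues i := by
    simp [hA.trace_eq_sum_eigenvalues]
  rw [traceNorm, hsum, Finset.mul_sum, ← Finset.sum_sub_distrib]
  refine Finset.sum_congr rfl fun i _ => ?_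
  rcases le_total 0 (hA.eigenvalues i) with h | h
  · rw [abs_of_nonneg h, max_eq_left h]; ring
  · rw [abs_of_nonpos h, max_eq_right h]; ring

lemma sum_norm_sq_dotProduct_eigenvectorBasis (hA : A.IsHermitian) (ψ : n → ℂ) :
    ∑ i, ‖star ψ ⬝ᵥ hA.eigenvectorBasis i‖ ^ 2 = ∑ p, ‖ψ p‖ ^ 2 := by
  have := hA.eigenvectorBasis.sum_sq_norm_inner_left (WithLp.toLp 2 ψ)
  simp only [EuclideanSpace.inner_eq_star_dotProduct, dotProduct_comm _ (star _),
    EuclideanSpace.norm_sq_eq] at this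
  exact this

lemma sum_max_eigenvalues_le {ψ : n → ℂ} (hA : A.IsHermitian) (hψ : ∑ p, ‖ψ p‖ ^ 2 = 1)
    {c : ℝ} (hc : 0 ≤ c) (hle : ∀ v, (star v ⬝ᵥ (A *ᵥ v)).re ≤ c * ‖star ψ ⬝ᵥ v‖ ^ 2) :
    ∑ i, max (hA.eigenvalues i) 0 ≤ c := by
  calc ∑ i, max (hA.eigenvalues i) 0
      ≤ ∑ i, c * ‖star ψ ⬝ᵥ hA.eigenvectorBasis i‖ ^ 2 := by
        refine Finset.sum_le_sum fun i _ => max_le ?_ (by positivity)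
        simpa [hA.eigenvalues_eq i] using hle (hA.eigenvectorBasis i)
    _ = c := by rw [← Finset.mul_sum, sum_norm_sq_dotProduct_eigenvectorBasis, hψ, mul_one]

lemma mem_range_eigenvalues_of_mulVec_eq {ψ : n → ℂ} (hA : A.IsHermitian) (hψ : ψ ≠ 0) {c : ℝ}
    (h : A *ᵥ ψ = (c : ℂ) • ψ) : c ∈ Set.range hA.eigenvalues := by
  rw [← hA.spectrum_real_eq_range_eigenvalues, spectrum.mem_iff]
  intro hunit
  refine hψ (mulVec_injective_of_isUnit hunit ?_)
  simp [sub_mulVec, h, Algebra.algebraMap_eq_smul_one, smul_mulVec]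

lemma le_sum_max_eigenvalues {ψ : n → ℂ} (hA : A.IsHermitian) (hψ : ψ ≠ 0) {c : ℝ}
    (h : A *ᵥ ψ = (c : ℂ) • ψ) : c ≤ ∑ i, max (hA.eigenvalues i) 0 := by
  obtain ⟨i, rfl⟩ := hA.mem_range_eigenvalues_of_mulVec_eq hψ h
  exact (le_max_left _ _).trans
    (Finset.single_le_sum (f := fun j => max (hA.eigenvalues j) 0)
      (fun j _ => le_max_right _ _) (Finset.mem_univ i))

end Matrix.IsHermitian

lemma norm_sum_mul_sq_le {ι R : Type*} [SeminormedRing R] (s : Finset ι) (x y : ι → R)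
    {w : ι → ℝ} (hw : ∀ i ∈ s, 0 < w i) :
    ‖∑ i ∈ s, x i * y i‖ ^ 2 ≤ (∑ i ∈ s, ‖x i‖ ^ 2 / w i) * ∑ i ∈ s, w i * ‖y i‖ ^ 2 := by
  calc ‖∑ i ∈ s, x i * y i‖ ^ 2 ≤ (∑ i ∈ s, ‖x i * y i‖) ^ 2 := by
        gcongr; exact norm_sum_le _ _
    _ ≤ _ := by
        refine Finset.sum_sq_le_sum_mul_sum_of_sq_le_mul s (fun i hi => ?_) (fun i hi => ?_)
          (fun i hi => ?_)
        · have := hw i hi; positivity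
        · have := hw i hi; positivity
        · have := (hw i hi).ne'
          calc ‖x i * y i‖ ^ 2 ≤ (‖x i‖ * ‖y i‖) ^ 2 := by gcongr; exact norm_mul_le _ _
            _ = _ := by field_simp

section DotProduct

variable {ι V : Type*} [Fintype V]

lemma star_dotProduct_self_eq_sum_norm_sq (ψ : V → ℂ) :
    star ψ ⬝ᵥ ψ = ((∑ p, ‖ψ p‖ ^ 2 : ℝ) : ℂ) := by
  simp [dotProduct, Complex.conj_mul']

lemma re_dotProduct_vecMulVec_star_mulVec (z v : V → ℂ) :
    (star v ⬝ᵥ (vecMulVec z (star z) *ᵥ v)).re = ‖star z ⬝ᵥ v‖ ^ 2 := by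
  have h : star v ⬝ᵥ z = star (star z ⬝ᵥ v) := by rw [star_dotProduct]
  rw [vecMulVec_mulVec, op_smul_eq_smul, dotProduct_smul, smul_eq_mul, h, Complex.star_def,
    Complex.mul_conj']
  norm_cast

def IsOrthonormal [DecidableEq ι] (θ : ι → V → ℂ) : Prop :=
  ∀ i j, star (θ i) ⬝ᵥ θ j = if i = j then 1 else 0

variable [DecidableEq ι] {θ : ι → V → ℂ}

lemma IsOrthonormal.sum_norm_sq_eq_one (hθ : IsOrthonormal θ) (i : ι) :
    ∑ k, ‖θ i k‖ ^ 2 = 1 := by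
  have h := (star_dotProduct_self_eq_sum_norm_sq (θ i)).symm.trans (hθ i i)
  rw [if_pos rfl] at h
  exact_mod_cast h

lemma IsOrthonormal.star_dotProduct_sum_smul [Fintype ι] (hθ : IsOrthonormal θ) (c : ι → ℂ)
    (b : ι) : star (θ b) ⬝ᵥ ∑ i, c i • θ i = c b := by
  simp [dotProduct_sum, dotProduct_smul, hθ b]

end DotProduct

namespace IsOrthonormal

variable {m : Type*} [Fintype m] [DecidableEq m] {θ : m → m → ℂ}

lemma sum_vecMulVec_star_eq_one (hθ : IsOrthonormal θ) :
    ∑ i, vecMulVec (θ i) (star (θ i)) = 1 := by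
  let U : Matrix m m ℂ := Matrix.of fun j i => θ i j
  have hU : Uᴴ * U = 1 := by
    ext i j
    simpa [U, mul_apply, dotProduct, one_apply] using hθ i j
  rw [← mul_eq_one_comm.mp hU]
  ext j j'
  simp [U, mul_apply, vecMulVec_apply, Matrix.sum_apply]

lemma sum_mul_star_eq_ite (hθ : IsOrthonormal θ) (j j' : m) :
    ∑ i, θ i j * star (θ i j') = if j = j' then 1 else 0 := by
  simpa [Matrix.sum_apply, vecMulVec_apply, one_apply] using
    congrFun (congrFun hθ.sum_vecMulVec_star_eq_one j) j'

lemma eq_sum_smul_vecMulVec_star (hθ : IsOrthonormal θ) {ρ : Matrix m m ℂ} {lam : m → ℝ}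
    (hρ : ∀ i, ρ *ᵥ θ i = (lam i : ℂ) • θ i) :
    ρ = ∑ i, (lam i : ℂ) • vecMulVec (θ i) (star (θ i)) := by
  conv_lhs => rw [← mul_one ρ, ← hθ.sum_vecMulVec_star_eq_one, Finset.mul_sum]
  simp only [mul_vecMulVec, hρ, smul_vecMulVec]

end IsOrthonormal

lemma kronecker_mulVec_kron {l n : Type*} [Fintype l] [Fintype n] (A : Matrix l l ℂ)
    (B : Matrix n n ℂ) (x : l → ℂ) (y : n → ℂ) :
    (A ⊗ₖ B) *ᵥ (fun p => x p.1 * y p.2) = fun p => (A *ᵥ x) p.1 * (B *ᵥ y) p.2 := by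
  ext ⟨j, k⟩
  simp only [mulVec, dotProduct, Fintype.sum_prod_type, kroneckerMap_apply, Finset.sum_mul_sum]
  exact Finset.sum_congr rfl fun _ _ => Finset.sum_congr rfl fun _ _ => by ring

section Bipartite

variable {m n : Type*} [Fintype m]

def reducedState (ψ : m × n → ℂ) : Matrix n n ℂ :=
  Matrix.of fun k l => ∑ i, ψ (i, k) * star (ψ (i, l))

lemma reducedState_eq_sum_vecMulVec (ψ : m × n → ℂ) :
    reducedState ψ = ∑ i, vecMulVec (fun k => ψ (i, k)) (star fun k => ψ (i, k)) := by
  ext k l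
  simp [reducedState, Matrix.sum_apply, vecMulVec_apply]

lemma trace_reducedState [Fintype n] (ψ : m × n → ℂ) : (reducedState ψ).trace = star ψ ⬝ᵥ ψ := by
  simp only [trace, reducedState, diag_apply, of_apply, dotProduct, Fintype.sum_prod_type,
    Pi.star_apply]
  rw [Finset.sum_comm]
  exact Finset.sum_congr rfl fun _ _ => Finset.sum_congr rfl fun _ _ => mul_comm _ _

lemma kronecker_reducedState_eq_sum {ρ : Matrix m m ℂ} {lam : m → ℝ} {θ : m → m → ℂ}
    (hρ : ρ = ∑ i, (lam i : ℂ) • vecMulVec (θ i) (star (θ i))) (ψ : m × n → ℂ) :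
    ρ ⊗ₖ reducedState ψ = ∑ q : m × m, (lam q.1 : ℂ) •
      vecMulVec (fun p => θ q.1 p.1 * ψ (q.2, p.2)) (star fun p => θ q.1 p.1 * ψ (q.2, p.2)) := by
  subst hρ
  ext ⟨j, k⟩ ⟨j', k'⟩
  simp only [kroneckerMap_apply, Matrix.sum_apply, Matrix.smul_apply, vecMulVec_apply,
    reducedState, of_apply, Pi.star_apply, smul_eq_mul, star_mul', Finset.sum_mul_sum,
    Fintype.sum_prod_type]
  exact Finset.sum_congr rfl fun _ _ => Finset.sum_congr rfl fun _ _ => by ring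

variable [DecidableEq m] {θ : m → m → ℂ}

lemma eq_sum_star_smul_kron (hθ : IsOrthonormal θ) (ψ : m × n → ℂ) :
    ψ = ∑ q : m × m, star (θ q.1 q.2) • fun p => θ q.1 p.1 * ψ (q.2, p.2) := by
  ext ⟨j, l⟩
  simp only [Finset.sum_apply, Pi.smul_apply, smul_eq_mul, Fintype.sum_prod_type]
  calc ψ (j, l) = ∑ k, (if j = k then 1 else 0) * ψ (k, l) := by simp
    _ = ∑ k, (∑ i, θ i j * star (θ i k)) * ψ (k, l) := by simp_rw [hθ.sum_mul_star_eq_ite]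
    _ = _ := by
      rw [Finset.sum_comm]
      simp_rw [Finset.sum_mul]
      exact Finset.sum_congr rfl fun _ _ => Finset.sum_congr rfl fun _ _ => by ring

lemma mul_norm_sq_le_re_dotProduct_kronecker_reducedState [Fintype n] (hθ : IsOrthonormal θ)
    {ρ : Matrix m m ℂ} {lam : m → ℝ} (hρ : ∀ i, ρ *ᵥ θ i = (lam i : ℂ) • θ i)
    (hlam : ∀ i, 0 < lam i) (ψ v : m × n → ℂ) :
    (∑ i, (lam i)⁻¹)⁻¹ * ‖star ψ ⬝ᵥ v‖ ^ 2
      ≤ (star v ⬝ᵥ ((ρ ⊗ₖ reducedState ψ) *ᵥ v)).re := by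
  set z : m × m → m × n → ℂ := fun q p => θ q.1 p.1 * ψ (q.2, p.2)
  set S := ∑ i, (lam i)⁻¹
  set X := ∑ q : m × m, lam q.1 * ‖star (z q) ⬝ᵥ v‖ ^ 2
  have hquad : (star v ⬝ᵥ ((ρ ⊗ₖ reducedState ψ) *ᵥ v)).re = X := by
    rw [kronecker_reducedState_eq_sum (hθ.eq_sum_smul_vecMulVec_star hρ), sum_mulVec,
      dotProduct_sum, Complex.re_sum]
    refine Finset.sum_congr rfl fun q _ => ?_
    rw [smul_mulVec, dotProduct_smul, smul_eq_mul, Complex.re_ofReal_mul,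
      re_dotProduct_vecMulVec_star_mulVec]
  have hexpand : star ψ ⬝ᵥ v = ∑ q, θ q.1 q.2 * (star (z q) ⬝ᵥ v) := by
    conv_lhs => rw [eq_sum_star_smul_kron hθ ψ]
    simp [z, star_sum, sum_dotProduct, smul_dotProduct]
  have hweights : ∑ q : m × m, ‖θ q.1 q.2‖ ^ 2 / lam q.1 = S := by
    simp_rw [Fintype.sum_prod_type, div_eq_mul_inv, ← Finset.sum_mul, hθ.sum_norm_sq_eq_one,
      one_mul, S]
  have hCS : ‖star ψ ⬝ᵥ v‖ ^ 2 ≤ S * X := by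
    rw [hexpand, ← hweights]
    exact norm_sum_mul_sq_le _ _ _ fun q _ => hlam q.1
  have hX : 0 ≤ X := Finset.sum_nonneg fun q _ => by have := hlam q.1; positivity
  have hS0 : 0 ≤ S⁻¹ := inv_nonneg.mpr (Finset.sum_nonneg fun i _ => (inv_pos.mpr (hlam i)).le)
  have hS : S⁻¹ * S ≤ 1 := by
    rcases eq_or_ne S 0 with h | h
    · simp [h]
    · rw [inv_mul_cancel₀ h]
  rw [hquad]
  calc S⁻¹ * ‖star ψ ⬝ᵥ v‖ ^ 2 ≤ S⁻¹ * (S * X) := by gcongr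
    _ ≤ X := by rw [← mul_assoc]; exact mul_le_of_le_one_left hX hS

end Bipartite

section Schmidt

variable {m : Type*} [Fintype m]

def schmidtVector (s : m → ℝ) (θ : m → m → ℂ) : m × m → ℂ :=
  fun p => ∑ i, (s i : ℂ) * θ i p.1 * θ i p.2

lemma schmidtVector_apply_swap (s : m → ℝ) (θ : m → m → ℂ) (j k : m) :
    schmidtVector s θ (k, j) = schmidtVector s θ (j, k) := by
  simp only [schmidtVector, mul_right_comm]

lemma schmidtVector_eq_sum (s : m → ℝ) (θ : m → m → ℂ) :
    schmidtVector s θ = ∑ i, (s i : ℂ) • fun p : m × m => θ i p.1 * θ i p.2 := by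
  ext p
  simp [schmidtVector, mul_assoc]

variable [DecidableEq m] {θ : m → m → ℂ}

lemma star_dotProduct_schmidtVector_slice (hθ : IsOrthonormal θ) (s : m → ℝ) (b j : m) :
    star (θ b) ⬝ᵥ (fun k => schmidtVector s θ (j, k)) = s b * θ b j := by
  have hslice : (fun k => schmidtVector s θ (j, k)) = ∑ i, ((s i : ℂ) * θ i j) • θ i := by
    ext k
    simp [schmidtVector]
  rw [hslice, hθ.star_dotProduct_sum_smul]

lemma reducedState_schmidtVector_mulVec (hθ : IsOrthonormal θ) (s : m → ℝ) (b : m) :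
    reducedState (schmidtVector s θ) *ᵥ θ b = ((s b ^ 2 : ℝ) : ℂ) • θ b := by
  have hcoord : ∀ j, star (fun k => schmidtVector s θ (j, k)) ⬝ᵥ θ b = s b * star (θ b j) :=
    fun j => by
      rw [← star_star (star _ ⬝ᵥ θ b), star_dotProduct, star_star,
        star_dotProduct_schmidtVector_slice hθ]
      simp
  ext k
  rw [reducedState_eq_sum_vecMulVec, sum_mulVec]
  simp only [vecMulVec_mulVec, hcoord, op_smul_eq_smul, Finset.sum_apply, Pi.smul_apply,
    smul_eq_mul]
  calc ∑ j, (s b : ℂ) * star (θ b j) * schmidtVector s θ (j, k)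
      = s b * (star (θ b) ⬝ᵥ fun j => schmidtVector s θ (k, j)) := by
        rw [dotProduct, Finset.mul_sum]
        exact Finset.sum_congr rfl fun j _ => by rw [schmidtVector_apply_swap, mul_assoc]; rfl
    _ = _ := by rw [star_dotProduct_schmidtVector_slice hθ]; push_cast; ring

lemma kronecker_reducedState_schmidtVector_mulVec (hθ : IsOrthonormal θ)
    {ρ : Matrix m m ℂ} {lam : m → ℝ} (hρ : ∀ i, ρ *ᵥ θ i = (lam i : ℂ) • θ i)
    {s : m → ℝ} {c : ℝ} (hs : ∀ i, lam i * s i ^ 2 = c) :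
    (ρ ⊗ₖ reducedState (schmidtVector s θ)) *ᵥ schmidtVector s θ = (c : ℂ) • schmidtVector s θ := by
  conv_lhs => rw [schmidtVector_eq_sum s θ]
  rw [mulVec_sum, schmidtVector_eq_sum s θ, Finset.smul_sum]
  refine Finset.sum_congr rfl fun i _ => ?_
  rw [mulVec_smul, kronecker_mulVec_kron, hρ, ← schmidtVector_eq_sum,
    reducedState_schmidtVector_mulVec hθ, ← hs i, smul_comm]
  ext p
  simp only [Pi.smul_apply, smul_eq_mul]
  push_cast
  ring

lemma star_dotProduct_self_schmidtVector (hθ : IsOrthonormal θ) (s : m → ℝ) :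
    star (schmidtVector s θ) ⬝ᵥ schmidtVector s θ = ((∑ i, s i ^ 2 : ℝ) : ℂ) := by
  rw [← trace_reducedState,
    hθ.eq_sum_smul_vecMulVec_star (reducedState_schmidtVector_mulVec hθ s)]
  simp [trace_sum, dotProduct_comm (θ _), hθ _ _]

end Schmidt

section Discrimination

variable {m n : Type*} [Fintype m] [Fintype n]

noncomputable def discriminationMatrix (ρ : Matrix m m ℂ) (a g : ℝ) (ψ : m × n → ℂ) :
    Matrix (m × n) (m × n) ℂ :=
  a • vecMulVec ψ (star ψ) + g • (ρ ⊗ₖ reducedState ψ)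

variable {ρ : Matrix m m ℂ} {a g : ℝ} {ψ : m × n → ℂ}

lemma trace_discriminationMatrix (hρ : ρ.trace = 1) (hψ : ∑ p, ‖ψ p‖ ^ 2 = 1) :
    (discriminationMatrix ρ a g ψ).trace = a + g := by
  have hψ' : star ψ ⬝ᵥ ψ = 1 := by simp [star_dotProduct_self_eq_sum_norm_sq, hψ]
  simp [discriminationMatrix, trace_kronecker, hρ, trace_reducedState, hψ', dotProduct_comm ψ]

lemma re_dotProduct_discriminationMatrix_mulVec_le [DecidableEq m] {θ : m → m → ℂ}
    (hθ : IsOrthonormal θ) {lam : m → ℝ} (hρ : ∀ i, ρ *ᵥ θ i = (lam i : ℂ) • θ i)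
    (hlam : ∀ i, 0 < lam i) (hg : g ≤ 0) (v : m × n → ℂ) :
    (star v ⬝ᵥ (discriminationMatrix ρ a g ψ *ᵥ v)).re
      ≤ (a + g * (∑ i, (lam i)⁻¹)⁻¹) * ‖star ψ ⬝ᵥ v‖ ^ 2 := by
  have hK := mul_norm_sq_le_re_dotProduct_kronecker_reducedState hθ hρ hlam ψ v
  rw [discriminationMatrix, add_mulVec, dotProduct_add, smul_mulVec, smul_mulVec,
    dotProduct_smul, dotProduct_smul, Complex.add_re, Complex.smul_re, Complex.smul_re,
    re_dotProduct_vecMulVec_star_mulVec, smul_eq_mul, smul_eq_mul]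
  nlinarith

variable [DecidableEq m] [DecidableEq n]

lemma traceNorm_discriminationMatrix_le {θ : m → m → ℂ} (hθ : IsOrthonormal θ) {lam : m → ℝ}
    (hρ : ∀ i, ρ *ᵥ θ i = (lam i : ℂ) • θ i) (hlam : ∀ i, 0 < lam i) (htr : ρ.trace = 1)
    (hg : g ≤ 0) (hpos : 0 ≤ a + g * (∑ i, (lam i)⁻¹)⁻¹) (hψ : ∑ p, ‖ψ p‖ ^ 2 = 1)
    (hΩ : (discriminationMatrix ρ a g ψ).IsHermitian) :
    traceNorm hΩ ≤ a - g + 2 * g * (∑ i, (lam i)⁻¹)⁻¹ := by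
  have hmax := hΩ.sum_max_eigenvalues_le hψ hpos
    (re_dotProduct_discriminationMatrix_mulVec_le hθ hρ hlam hg)
  rw [hΩ.traceNorm_eq_two_mul_sum_max_sub_re_trace, trace_discriminationMatrix htr hψ]
  simp only [Complex.add_re, Complex.ofReal_re]
  linarith

lemma le_traceNorm_discriminationMatrix {c : ℝ} (htr : ρ.trace = 1) (hψ : ∑ p, ‖ψ p‖ ^ 2 = 1)
    (hK : (ρ ⊗ₖ reducedState ψ) *ᵥ ψ = (c : ℂ) • ψ)
    (hΩ : (discriminationMatrix ρ a g ψ).IsHermitian) :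
    2 * (a + g * c) - (a + g) ≤ traceNorm hΩ := by
  have hψ' : star ψ ⬝ᵥ ψ = 1 := by simp [star_dotProduct_self_eq_sum_norm_sq, hψ]
  have hψ0 : ψ ≠ 0 := by rintro rfl; simp at hψ'
  have heig : discriminationMatrix ρ a g ψ *ᵥ ψ = ((a + g * c : ℝ) : ℂ) • ψ := by
    rw [discriminationMatrix, add_mulVec, smul_mulVec, smul_mulVec, vecMulVec_mulVec, hψ', hK]
    ext p
    simp only [Pi.add_apply, Pi.smul_apply, op_smul_eq_smul, one_smul, smul_eq_mul,
      Complex.real_smul]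
    push_cast
    ring
  have hmax := hΩ.le_sum_max_eigenvalues hψ0 heig
  rw [hΩ.traceNorm_eq_two_mul_sum_max_sub_re_trace, trace_discriminationMatrix htr hψ]
  simp only [Complex.add_re, Complex.ofReal_re]
  linarith

end Discrimination

theorem region_III_quantum_general {d : ℕ}
    (ρE : Matrix (Fin d) (Fin d) ℂ) (hEtr : ρE.trace = 1)
    (lam : Fin d → ℝ) (hlam : ∀ i, 0 < lam i)
    (θ : Fin d → Fin d → ℂ)
    (hortho : ∀ i j, star (θ i) ⬝ᵥ θ j = if i = j then 1 else 0)
    (heig : ∀ i, ρE.mulVec (θ i) = (lam i : ℂ) • θ i)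
    (lamH : ℝ) (hlamH : lamH = (∑ i, (lam i)⁻¹)⁻¹)
    (p₀ p₁ η : ℝ) (hsum : p₀ + p₁ = 1)
    (hγ : p₁ * (1 - η) - p₀ < 0)
    (hpos : 0 < p₁ * η + (p₁ * (1 - η) - p₀) * lamH)
    (ψh : Fin d × Fin d → ℂ)
    (hψh : ψh = fun p => ∑ i, (Real.sqrt (lamH / lam i) : ℂ) * θ i p.1 * θ i p.2) :
    (∀ ψ : Fin d × Fin d → ℂ, ∑ p, ‖ψ p‖ ^ 2 = 1 →
      ∀ hΩ : ((p₁ * η) • vecMulVec ψ (star ψ) + (p₁ * (1 - η) - p₀) •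
          (ρE ⊗ₖ (Matrix.of fun k l => ∑ i, ψ (i, k) * star (ψ (i, l))))).IsHermitian,
        traceNorm hΩ ≤ p₁ * η - (p₁ * (1 - η) - p₀) + 2 * (p₁ * (1 - η) - p₀) * lamH) ∧
    (∀ hΩ : ((p₁ * η) • vecMulVec ψh (star ψh) + (p₁ * (1 - η) - p₀) •
          (ρE ⊗ₖ (Matrix.of fun k l => ∑ i, ψh (i, k) * star (ψh (i, l))))).IsHermitian,
        traceNorm hΩ = p₁ * η - (p₁ * (1 - η) - p₀) + 2 * (p₁ * (1 - η) - p₀) * lamH ∧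
        (1 - traceNorm hΩ) / 2 = p₀ + (p₁ * (1 - η) - p₀) * (1 - lamH)) := by
  subst hlamH
  have : Nonempty (Fin d) := by
    by_contra h
    simp [Matrix.trace, not_nonempty_iff.mp h] at hEtr
  have hS : 0 < ∑ i, (lam i)⁻¹ :=
    Finset.sum_pos (fun i _ => inv_pos.mpr (hlam i)) Finset.univ_nonempty
  set s : Fin d → ℝ := fun i => Real.sqrt ((∑ j, (lam j)⁻¹)⁻¹ / lam i)
  obtain rfl : ψh = schmidtVector s θ := hψh
  have hweights : ∀ i, lam i * s i ^ 2 = (∑ j, (lam j)⁻¹)⁻¹ := fun i => by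
    rw [Real.sq_sqrt (by have := hlam i; positivity), mul_div_cancel₀ _ (hlam i).ne']
  have hunit : ∑ p, ‖schmidtVector s θ p‖ ^ 2 = 1 := by
    have h := star_dotProduct_self_schmidtVector hortho s
    rw [star_dotProduct_self_eq_sum_norm_sq, Complex.ofReal_inj] at h
    rw [h, ← inv_mul_cancel₀ hS.ne', Finset.mul_sum]
    refine Finset.sum_congr rfl fun i _ => ?_
    rw [← hweights i]
    field_simp [(hlam i).ne']
  refine ⟨fun ψ hψ hΩ =>
    traceNorm_discriminationMatrix_le hortho heig hlam hEtr hγ.le hpos.le hψ hΩ, fun hΩ => ?_⟩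
  have upper := traceNorm_discriminationMatrix_le hortho heig hlam hEtr hγ.le hpos.le hunit hΩ
  have lower := le_traceNorm_discriminationMatrix hEtr hunit
    (kronecker_reducedState_schmidtVector_mulVec hortho heig hweights) hΩ
  have heq : traceNorm hΩ = _ := le_antisymm upper (le_trans (le_of_eq (by ring)) lower)
  exact ⟨heq, by rw [heq]; linarith⟩

/-- **Region III, quantum illumination.** Let `ρ_E` be positive definite with eigenvalues
`λᵢ > 0`, orthonormal eigenvectors `θᵢ`, and `λ_h := (Σᵢ λᵢ⁻¹)⁻¹`.  Let
`γ := p₁(1-η) - p₀` and assume `γ < 0` and `p₁η + γλ_h > 0` (Region III).  Then (a) for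
every unit bipartite vector `ψ` with reduced state `ρ_B` on the second factor,
`‖p₁η·|ψ⟩⟨ψ| + γ·(ρ_E ⊗ ρ_B)‖₁ ≤ p₁η − γ + 2γλ_h`; and (b) equality holds for
`ψ_h := Σᵢ √(λ_h/λᵢ)·θᵢ ⊗ θᵢ`, for which the Helstrom error `(1 − ‖Ω_q‖₁)/2` equals
`p₀ + γ(1 − λ_h)`. -/
theorem region_III_quantum {d : ℕ}
    (ρE : Matrix (Fin d) (Fin d) ℂ) (hE : ρE.PosDef) (hEtr : ρE.trace = 1)
    (lam : Fin d → ℝ) (hlam : ∀ i, 0 < lam i)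
    (θ : Fin d → Fin d → ℂ)
    (hortho : ∀ i j, star (θ i) ⬝ᵥ θ j = if i = j then 1 else 0)
    (heig : ∀ i, ρE.mulVec (θ i) = (lam i : ℂ) • θ i)
    (lamH : ℝ) (hlamH : lamH = (∑ i, (lam i)⁻¹)⁻¹)
    (p₀ p₁ η : ℝ) (hp₀ : 0 ≤ p₀) (hp₁ : 0 ≤ p₁) (hsum : p₀ + p₁ = 1)
    (hη₀ : 0 ≤ η) (hη₁ : η ≤ 1)
    (hγ : p₁ * (1 - η) - p₀ < 0)
    (hpos : 0 < p₁ * η + (p₁ * (1 - η) - p₀) * lamH)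
    (ψh : Fin d × Fin d → ℂ)
    (hψh : ψh = fun p => ∑ i, (Real.sqrt (lamH / lam i) : ℂ) * θ i p.1 * θ i p.2) :
    (∀ ψ : Fin d × Fin d → ℂ, ∑ p, ‖ψ p‖ ^ 2 = 1 →
      ∀ hΩ : ((p₁ * η) • vecMulVec ψ (star ψ) + (p₁ * (1 - η) - p₀) •
          (ρE ⊗ₖ (Matrix.of fun k l => ∑ i, ψ (i, k) * star (ψ (i, l))))).IsHermitian,
        traceNorm hΩ ≤ p₁ * η - (p₁ * (1 - η) - p₀) + 2 * (p₁ * (1 - η) - p₀) * lamH) ∧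
    (∀ hΩ : ((p₁ * η) • vecMulVec ψh (star ψh) + (p₁ * (1 - η) - p₀) •
          (ρE ⊗ₖ (Matrix.of fun k l => ∑ i, ψh (i, k) * star (ψh (i, l))))).IsHermitian,
        traceNorm hΩ = p₁ * η - (p₁ * (1 - η) - p₀) + 2 * (p₁ * (1 - η) - p₀) * lamH ∧
        (1 - traceNorm hΩ) / 2 = p₀ + (p₁ * (1 - η) - p₀) * (1 - lamH)) :=
  region_III_quantum_general ρE hEtr lam hlam θ hortho heig lamH hlamH p₀ p₁ η hsum hγ hpos ψh hψh
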